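/- Let u be a unit quaternion. Consider the point (u, u) ∈ S³×S³ (the image of the diagonal immersion f : S³ → S³×S³, f(u) = (u,u)), whose tangent image consists of the vectors Z = (U, U) with Re(u⁻¹U) = 0. Then: (i) for all such Z = (U,U) and Z' = (U',U'), g(Z', J(Z)) = 0, i.e. the immersion is Lagrangian; (ii) P(Z) = Z for every such Z, i.e. all three angle functions of this Lagrangian immersion satisfy 2θ = 0. Here J, g, and P are evaluated at the point (u,u). -/

import Mathlib

open Quaternion

noncomputable section

/-- Euclidean inner product on ℍ ≅ ℝ⁴: ⟨a,b⟩ = Re(a · conj b). -/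
def innQ (a b : ℍ[ℝ]) : ℝ := (a * star b).re

/-- Euclidean product inner product on ℍ × ℍ. -/
def innP (Z Z' : ℍ[ℝ] × ℍ[ℝ]) : ℝ := innQ Z.1 Z'.1 + innQ Z.2 Z'.2

/-- Tangency to S³ × S³ at (p,q). -/
def Tangent (p q : ℍ[ℝ]) (Z : ℍ[ℝ] × ℍ[ℝ]) : Prop :=
  (p⁻¹ * Z.1).re = 0 ∧ (q⁻¹ * Z.2).re = 0

/-- The almost complex structure J of the nearly Kähler S³×S³ at the point (p,q). -/
def Jmap (p q : ℍ[ℝ]) (Z : ℍ[ℝ] × ℍ[ℝ]) : ℍ[ℝ] × ℍ[ℝ] :=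
  (Real.sqrt 3)⁻¹ •
    ((2 * (p * q⁻¹ * Z.2) - Z.1, -(2 * (q * p⁻¹ * Z.1)) + Z.2) : ℍ[ℝ] × ℍ[ℝ])

/-- The nearly Kähler metric g at the point (p,q). -/
def gmet (p q : ℍ[ℝ]) (Z Z' : ℍ[ℝ] × ℍ[ℝ]) : ℝ :=
  (4/3) * (innQ Z.1 Z'.1 + innQ Z.2 Z'.2)
    - (2/3) * (innQ (p⁻¹ * Z.1) (q⁻¹ * Z'.2) + innQ (p⁻¹ * Z'.1) (q⁻¹ * Z.2))

/-- The almost product structure P at the point (p,q). -/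
def Pmap (p q : ℍ[ℝ]) (Z : ℍ[ℝ] × ℍ[ℝ]) : ℍ[ℝ] × ℍ[ℝ] :=
  (p * q⁻¹ * Z.2, q * p⁻¹ * Z.1)

/-- The usual product structure Q. -/
def Qmap (Z : ℍ[ℝ] × ℍ[ℝ]) : ℍ[ℝ] × ℍ[ℝ] := (-Z.1, Z.2)

/-- The quaternion units i, j, k. -/
def qi : ℍ[ℝ] := ⟨0, 1, 0, 0⟩
def qj : ℍ[ℝ] := ⟨0, 0, 1, 0⟩
def qk : ℍ[ℝ] := ⟨0, 0, 0, 1⟩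

/-!
At a diagonal point `(u,u)` we have `u u⁻¹ = 1`, so `J` sends `(U,U)` to the anti-diagonal
vector `(U,-U)/√3` and `P` is the swap `(U,V) ↦ (V,U)`. The nearly Kähler metric pairs a
diagonal vector with an anti-diagonal one to zero: the `4/3` part cancels outright and the two
cross terms cancel by symmetry of the Euclidean inner product.
-/

theorem innQ_eq_inner (a b : ℍ[ℝ]) : innQ a b = inner ℝ a b :=
  (Quaternion.inner_def a b).symm

theorem innQ_comm (a b : ℍ[ℝ]) : innQ a b = innQ b a := by
  simp only [innQ_eq_inner, real_inner_comm]

theorem innQ_neg_right (a b : ℍ[ℝ]) : innQ a (-b) = -innQ a b := by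
  simp only [innQ_eq_inner, inner_neg_right]

theorem Jmap_self {p : ℍ[ℝ]} (hp : p ≠ 0) (U V : ℍ[ℝ]) :
    Jmap p p (U, V) = ((Real.sqrt 3)⁻¹ • (2 * V - U), (Real.sqrt 3)⁻¹ • (V - 2 * U)) := by
  simp only [Jmap, mul_inv_cancel₀ hp, one_mul, Prod.smul_mk, neg_add_eq_sub]

theorem Jmap_self_diag {p : ℍ[ℝ]} (hp : p ≠ 0) (U : ℍ[ℝ]) :
    Jmap p p (U, U) = ((Real.sqrt 3)⁻¹ • U, -((Real.sqrt 3)⁻¹ • U)) := by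
  rw [Jmap_self hp, ← smul_neg]
  congr 2
  · rw [two_mul, add_sub_cancel_right]
  · rw [two_mul, sub_add_eq_sub_sub, sub_self, zero_sub]

theorem Pmap_self {p : ℍ[ℝ]} (hp : p ≠ 0) (Z : ℍ[ℝ] × ℍ[ℝ]) : Pmap p p Z = Z.swap := by
  simp only [Pmap, mul_inv_cancel₀ hp, one_mul, Prod.swap]

theorem gmet_self_diag_antidiag (p A B : ℍ[ℝ]) : gmet p p (A, A) (B, -B) = 0 := by
  simp only [gmet, mul_neg, innQ_neg_right, innQ_comm (p⁻¹ * B) (p⁻¹ * A)]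
  ring

/-- the diagonal immersion u ↦ (u,u) is Lagrangian with all angle
functions satisfying 2θ = 0, i.e. P = id on its tangent space. -/
theorem stmt_15 (u : ℍ[ℝ]) (hu : ‖u‖ = 1) :
    (∀ U U' : ℍ[ℝ], (u⁻¹ * U).re = 0 → (u⁻¹ * U').re = 0 →
      gmet u u (U', U') (Jmap u u (U, U)) = 0) ∧
    (∀ U : ℍ[ℝ], (u⁻¹ * U).re = 0 →
      Pmap u u (U, U) = (U, U)) := by
  have hu0 : u ≠ 0 := norm_ne_zero_iff.mp (hu ▸ one_ne_zero)
  refine ⟨fun U U' _ _ => ?_, fun U _ => ?_⟩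
  · rw [Jmap_self_diag hu0]
    exact gmet_self_diag_antidiag u U' _
  · exact Pmap_self hu0 (U, U)
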